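/- Let n ≥ 2 and let f ∈ F, f ≠ 0, be given by an admissible linear system 𝒜 = (e₁, A, v) of dimension n whose left family and right family are each K-linearly independent and with 1 ∉ R(𝒜), where A has the block form A = [[a, b', b], [a', B, b''], [0, 0, 1]] (with B ∈ F^{(n−2)×(n−2)}, b' ∈ F^{1×(n−2)}, a, b ∈ F, a', b'' ∈ F^{(n−2)×1}) and v = (0,…,0,λ)ᵀ with λ ∈ K. Then the n × n matrix A' = [[−λ Σ b'', −Σ B Σ, −Σ a'], [−λ b, −b' Σ, −a], [0, 0, 1]] (Σ = Σ_{n−2}) is invertible over F, 𝒜' = (e₁, A', e_n) is an admissible linear system of dimension n for f⁻¹, the left family and the right family of 𝒜' are each K-linearly independent, and 1 ∉ R(𝒜'). -/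

import Mathlib

open Matrix

/-- The permutation matrix `Σ_m` reversing the order of rows/columns. -/
def revMat (F : Type*) [Semiring F] (m : ℕ) : Matrix (Fin m) (Fin m) F :=
  Matrix.of fun p q => if q = p.rev then 1 else 0

/-!
Write `Â` for the leading `(n-1) × (n-1)` block of `A`, `c` for the top of its last column, and
`s = (f, s₂, λ)`, `t = (t₁, t₂, tₙ)` for the left and right families, so that `A s = v`, `t A = e₁`
and `tₙ λ = f`. The first relation says `Â (f, s₂) = -λ c`, and with it the blocks of `A'` become
`-(Σ_{n-1} Â M)` and `-(Σ_{n-1} Â e₁)`, where `M = [[-f, 0], [-s₂, Σ]]`. Since `Â` is invertible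
(because `A` is) and so is `M` (because `f ≠ 0`), `A'` is invertible, and a direct computation
gives `A' s' = e_n` and `t' A' = e₁` for `s' = (f⁻¹, Σ s₂ f⁻¹, 1)` and `t' = f⁻¹ (t₂ Σ, t₁, 1)`:
these are the families of `𝒜'`.

Up to a permutation, nonzero factors from `K` and multiplication by `f⁻¹`, the family `s'` is `s`,
and `(t', 1)` is `(t, 1)`: the appended `1 = f⁻¹ λ tₙ` takes the place of `tₙ`. Linear
independence of `(t, 1)` says exactly that `t` is independent and `1 ∉ R(𝒜)`, and likewise for
`(t', 1)` and `R(𝒜')`.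
-/

namespace Matrix

variable {R : Type*} [Ring R] {l m n o p : Type*}

/-- `B` is a two-sided inverse of `A`; unlike `Invertible`, the row and column index types of `A`
may differ. -/
def IsInvPair [Fintype m] [Fintype n] [DecidableEq m] [DecidableEq n]
    (A : Matrix m n R) (B : Matrix n m R) : Prop :=
  A * B = 1 ∧ B * A = 1

theorem IsInvPair.inv_mul_eq_of_mul_eq [Fintype m] [Fintype n] [DecidableEq m] [DecidableEq n]
    {A : Matrix m n R} {A' : Matrix n m R} {x : Matrix n o R} {y : Matrix m o R}
    (h : IsInvPair A A') (hx : A * x = y) : A' * y = x := by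
  rw [← hx, ← Matrix.mul_assoc, h.2, Matrix.one_mul]

theorem IsInvPair.mul_inv_eq_of_mul_eq [Fintype m] [Fintype n] [DecidableEq m] [DecidableEq n]
    {A : Matrix m n R} {A' : Matrix n m R} {x : Matrix o m R} {y : Matrix o n R}
    (h : IsInvPair A A') (hx : x * A = y) : y * A' = x := by
  rw [← hx, Matrix.mul_assoc, h.1, Matrix.mul_one]

section

variable [Fintype l] [Fintype m] [Fintype n] [Fintype o]
  [DecidableEq l] [DecidableEq m] [DecidableEq n] [DecidableEq o]

theorem IsInvPair.one : IsInvPair (1 : Matrix m m R) 1 :=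
  ⟨Matrix.one_mul 1, Matrix.one_mul 1⟩

theorem IsInvPair.mul {A : Matrix l m R} {A' : Matrix m l R} {C : Matrix m n R}
    {C' : Matrix n m R} (hA : IsInvPair A A') (hC : IsInvPair C C') :
    IsInvPair (A * C) (C' * A') :=
  ⟨by rw [Matrix.mul_assoc, ← Matrix.mul_assoc C, hC.1, Matrix.one_mul, hA.1],
    by rw [Matrix.mul_assoc, ← Matrix.mul_assoc A', hA.2, Matrix.one_mul, hC.2]⟩

theorem IsInvPair.neg {A : Matrix m n R} {A' : Matrix n m R} (h : IsInvPair A A') :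
    IsInvPair (-A) (-A') := by
  simpa only [IsInvPair, Matrix.neg_mul, Matrix.mul_neg, neg_neg] using h

theorem isInvPair_fromBlocks_zero_one {X : Matrix m n R} {Y : Matrix n m R}
    (h : IsInvPair X Y) (c : Matrix m o R) :
    IsInvPair (fromBlocks X c 0 1) (fromBlocks Y (-(Y * c)) 0 1) := by
  constructor <;> rw [fromBlocks_multiply, ← fromBlocks_one] <;>
    simp [h.1, h.2, ← Matrix.mul_assoc]

theorem isInvPair_fromBlocks_zero₁₂ {X : Matrix l m R} {X' : Matrix m l R}
    {Z : Matrix o n R} {Z' : Matrix n o R} (hX : IsInvPair X X') (hZ : IsInvPair Z Z')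
    (C : Matrix o m R) :
    IsInvPair (fromBlocks X 0 C Z) (fromBlocks X' 0 (-(Z' * C * X')) Z') := by
  constructor <;> rw [fromBlocks_multiply, ← fromBlocks_one] <;>
    simp [hX.1, hX.2, hZ.1, hZ.2, ← Matrix.mul_assoc, Matrix.mul_assoc _ X' X]

theorem isInvPair_fromBlocks_zero₁₁ {X : Matrix l n R} {X' : Matrix n l R}
    {Y : Matrix o m R} {Y' : Matrix m o R} (hX : IsInvPair X X') (hY : IsInvPair Y Y') :
    IsInvPair (fromBlocks 0 X Y 0) (fromBlocks 0 Y' X' 0) := by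
  constructor <;> rw [fromBlocks_multiply, ← fromBlocks_one] <;>
    simp [hX.1, hX.2, hY.1, hY.2]

theorem IsInvPair.of_fromBlocks_zero_one {X : Matrix m n R} {c : Matrix m o R}
    {B : Matrix (n ⊕ o) (m ⊕ o) R} (h : IsInvPair (fromBlocks X c 0 1) B) :
    IsInvPair X B.toBlocks₁₁ := by
  obtain ⟨h₁, h₂⟩ := h
  rw [← fromBlocks_toBlocks B, fromBlocks_multiply, ← fromBlocks_one] at h₁ h₂
  obtain ⟨h₁₁, -, h₂₁, -⟩ := fromBlocks_inj.mp h₁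
  obtain ⟨h₁₁', -, -, -⟩ := fromBlocks_inj.mp h₂
  simp only [Matrix.zero_mul, Matrix.one_mul, zero_add] at h₂₁
  simp only [h₂₁, Matrix.mul_zero, add_zero] at h₁₁ h₁₁'
  exact ⟨h₁₁, h₁₁'⟩

end

theorem fromRows_add_fromRows {S : Type*} [Add S] (A₁ B₁ : Matrix m n S)
    (A₂ B₂ : Matrix o n S) :
    fromRows A₁ A₂ + fromRows B₁ B₂ = fromRows (A₁ + B₁) (A₂ + B₂) := by
  ext (i | i) j <;> simp

theorem fromBlocks_zero_one_mul_eq_fromRows [Fintype n] [Fintype o] [DecidableEq o]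
    {X : Matrix m n R} {c : Matrix m o R} {s : Matrix (n ⊕ o) p R} {y : Matrix o p R}
    (h : fromBlocks X c 0 1 * s = fromRows 0 y) :
    s.toRows₂ = y ∧ X * s.toRows₁ + c * y = 0 := by
  rw [← fromRows_toRows s, fromBlocks_mul_fromRows] at h
  obtain ⟨h₁, h₂⟩ := fromRows_inj h
  simp only [Matrix.zero_mul, Matrix.one_mul, zero_add] at h₂
  exact ⟨h₂, h₂ ▸ h₁⟩

theorem toCols₁_mul_eq_of_mul_fromBlocks_zero_one [Fintype m] [Fintype o] [DecidableEq o]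
    {X : Matrix m n R} {c : Matrix m o R} {t : Matrix p (m ⊕ o) R} {e : Matrix p n R}
    (h : t * fromBlocks X c (0 : Matrix o n R) 1 = fromCols e 0) : t.toCols₁ * X = e := by
  rw [← fromCols_toCols t, fromCols_mul_fromBlocks] at h
  simpa using (fromCols_inj h).1

theorem fromCols_fromCols_one_zero_mul_apply [Fintype n] [Fintype o] [DecidableEq n]
    (X : Matrix ((Fin 1 ⊕ n) ⊕ o) p R) (q : p) :
    ((fromCols (fromCols 1 0) 0 : Matrix (Fin 1) ((Fin 1 ⊕ n) ⊕ o) R) * X) 0 q =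
      X (.inl (.inl 0)) q := by
  simp [Matrix.mul_apply, Fintype.sum_sum_type]

end Matrix

theorem revMat_mul_apply {F : Type*} [Semiring F] {m : ℕ} {n : Type*} [Fintype n]
    (M : Matrix (Fin m) n F) (i : Fin m) (j : n) :
    (revMat F m * M) i j = M i.rev j := by
  simp [revMat, Matrix.mul_apply, ite_mul]

theorem revMat_transpose (F : Type*) [Semiring F] (m : ℕ) : (revMat F m)ᵀ = revMat F m := by
  ext p q
  simp only [transpose_apply, revMat, of_apply]
  exact if_congr (by rw [eq_comm, Fin.rev_eq_iff]) rfl rfl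

theorem isInvPair_revMat (F : Type*) [Ring F] (m : ℕ) :
    IsInvPair (revMat F m) (revMat F m) := by
  have h : revMat F m * revMat F m = 1 := by
    ext p q
    rw [revMat_mul_apply]
    simp [revMat, Matrix.one_apply, eq_comm]
  exact ⟨h, h⟩

/-- `Σ_{m+1}`, with rows indexed by `Fin m ⊕ Fin 1` and columns by `Fin 1 ⊕ Fin m`. -/
def revSwap (F : Type*) [Semiring F] (m : ℕ) : Matrix (Fin m ⊕ Fin 1) (Fin 1 ⊕ Fin m) F :=
  fromBlocks 0 (revMat F m) 1 0

theorem isInvPair_revSwap (F : Type*) [Ring F] (m : ℕ) :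
    IsInvPair (revSwap F m) (revSwap F m)ᵀ := by
  rw [revSwap, fromBlocks_transpose, revMat_transpose]
  simpa using isInvPair_fromBlocks_zero₁₁ (isInvPair_revMat F m) IsInvPair.one

theorem isInvPair_of_const {F : Type*} [DivisionRing F] {f : F} (hf : f ≠ 0) :
    IsInvPair (of fun _ _ => f : Matrix (Fin 1) (Fin 1) F) (of fun _ _ => f⁻¹) := by
  constructor <;> ext i j <;>
    simp [Matrix.mul_apply, hf, Matrix.one_apply, Subsingleton.elim i j]

section LinearIndependent

variable {K F : Type*} [Field K] [DivisionRing F] [Algebra K F]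
  {ι ι' : Type*} {v : ι → F} {j : ι' → ι}

theorem LinearIndependent.units_smul_comp_mul_right (hv : LinearIndependent K v)
    (hj : j.Injective) (c : ι' → Kˣ) {g : F} (hg : g ≠ 0) :
    LinearIndependent K fun i => c i • (v (j i) * g) :=
  ((hv.comp j hj).map' (LinearMap.mulRight K g)
    (LinearMap.ker_eq_bot.mpr (mul_left_injective₀ hg))).units_smul c

theorem LinearIndependent.units_smul_comp_mul_left (hv : LinearIndependent K v)
    (hj : j.Injective) (c : ι' → Kˣ) {g : F} (hg : g ≠ 0) :
    LinearIndependent K fun i => c i • (g * v (j i)) :=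
  ((hv.comp j hj).map' (LinearMap.mulLeft K g)
    (LinearMap.ker_eq_bot.mpr (mul_right_injective₀ hg))).units_smul c

end LinearIndependent

def revIndex (m : ℕ) : (Fin 1 ⊕ Fin m) ⊕ Fin 1 → (Fin 1 ⊕ Fin m) ⊕ Fin 1
  | .inl (.inl _) => .inr 0
  | .inl (.inr i) => .inl (.inr i.rev)
  | .inr _ => .inl (.inl 0)

theorem revIndex_involutive (m : ℕ) : Function.Involutive (revIndex m) := by
  rintro ((i | i) | i) <;> simp [revIndex, Fin.fin_one_eq_zero]

/-- Up to factors from `K` and the factor `f⁻¹`, the right family of `𝒜'` with `1` appended is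
that of `𝒜` with `1` appended, reindexed along this map; `none` indexes the appended `1`. -/
def inverseRightIndex (m : ℕ) :
    Option ((Fin m ⊕ Fin 1) ⊕ Fin 1) → Option ((Fin 1 ⊕ Fin m) ⊕ Fin 1)
  | none => some (.inr 0)
  | some (.inl (.inl i)) => some (.inl (.inr i.rev))
  | some (.inl (.inr _)) => some (.inl (.inl 0))
  | some (.inr _) => none

theorem inverseRightIndex_injective (m : ℕ) : (inverseRightIndex m).Injective := by
  rintro (_ | ((i | i) | i)) (_ | ((j | j) | j)) h <;>
    simp_all [inverseRightIndex, Fin.fin_one_eq_zero]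

section InverseSystem

variable {K F : Type*} [Field K] [DivisionRing F] [Algebra K F] {m : ℕ} {lam : K} {f : F}

theorem mul_of_algebraMap {l : Type*} (X : Matrix l (Fin 1) F) (k : K) :
    X * (of fun _ _ => algebraMap K F k : Matrix (Fin 1) (Fin 1) F) = algebraMap K F k • X := by
  ext i j
  simp [Matrix.mul_apply, Algebra.commutes, Subsingleton.elim j 0]

/-- The matrix `A'` of the statement. -/
def inverseSystemMatrix (lam : K) (a b : F) (b' : Matrix (Fin 1) (Fin m) F)
    (B : Matrix (Fin m) (Fin m) F) (a' b'' : Matrix (Fin m) (Fin 1) F) :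
    Matrix ((Fin m ⊕ Fin 1) ⊕ Fin 1) ((Fin 1 ⊕ Fin m) ⊕ Fin 1) F :=
  fromBlocks
    (fromBlocks (-(algebraMap K F lam • (revMat F m * b''))) (-(revMat F m * B * revMat F m))
      (Matrix.of fun _ _ => -(algebraMap K F lam * b)) (-(b' * revMat F m)))
    (fromRows (-(revMat F m * a')) (Matrix.of fun _ _ => -a))
    0 1

variable {a b : F} {b' : Matrix (Fin 1) (Fin m) F} {B : Matrix (Fin m) (Fin m) F}
  {a' b'' : Matrix (Fin m) (Fin 1) F} {f₁ : Matrix (Fin 1) (Fin 1) F}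
  {s₂ : Matrix (Fin m) (Fin 1) F}

theorem inverseSystemMatrix_eq_fromBlocks
    (h : fromBlocks (of fun _ _ => a) b' a' B * fromRows f₁ s₂ +
      fromRows (of fun _ _ => b) b'' *
        (of fun _ _ => algebraMap K F lam : Matrix (Fin 1) (Fin 1) F) = 0) :
    inverseSystemMatrix lam a b b' B a' b'' =
      fromBlocks (-(revSwap F m * fromBlocks (of fun _ _ => a) b' a' B *
          fromBlocks (-f₁) 0 (-s₂) (revMat F m)))
        (-(revSwap F m * fromBlocks (of fun _ _ => a) b' a' B *
          fromRows (1 : Matrix (Fin 1) (Fin 1) F) (0 : Matrix (Fin m) (Fin 1) F))) 0 1 := by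
  rw [fromBlocks_mul_fromRows, fromRows_mul, fromRows_add_fromRows, ← fromRows_zero] at h
  obtain ⟨h₁, h₂⟩ := fromRows_inj h
  simp only [mul_of_algebraMap, algebraMap_smul] at h₁ h₂
  replace h₁ := eq_neg_of_add_eq_zero_left h₁
  replace h₂ := congrArg (revMat F m * ·) (eq_neg_of_add_eq_zero_left h₂)
  simp only [Matrix.mul_add, Matrix.mul_neg, Matrix.mul_smul, ← Matrix.mul_assoc] at h₂
  simp only [inverseSystemMatrix, revSwap, fromBlocks_multiply, fromBlocks_mul_fromRows,
    Matrix.zero_mul, Matrix.one_mul, Matrix.mul_zero, Matrix.mul_one, Matrix.mul_neg, zero_add,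
    add_zero, ← neg_add, h₁, h₂, neg_neg, fromBlocks_neg, fromRows_neg]
  congr 2 <;> ext <;> simp [Algebra.smul_def (A := F)]

theorem exists_isInvPair_inverseSystemMatrix {W : Matrix (Fin 1 ⊕ Fin m) (Fin 1 ⊕ Fin m) F}
    (hW : IsInvPair (fromBlocks (of fun _ _ => a) b' a' B) W)
    {g₁ : Matrix (Fin 1) (Fin 1) F} (hf₁ : IsInvPair f₁ g₁)
    (hs : fromBlocks (of fun _ _ => a) b' a' B * fromRows f₁ s₂ +
      fromRows (of fun _ _ => b) b'' *
        (of fun _ _ => algebraMap K F lam : Matrix (Fin 1) (Fin 1) F) = 0)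
    {u : Matrix (Fin 1) (Fin 1 ⊕ Fin m) F}
    (hu : u * fromBlocks (of fun _ _ => a) b' a' B = fromCols 1 0) :
    ∃ B' : Matrix ((Fin 1 ⊕ Fin m) ⊕ Fin 1) ((Fin m ⊕ Fin 1) ⊕ Fin 1) F,
      IsInvPair (inverseSystemMatrix lam a b b' B a' b'') B' ∧
      B' * fromRows 0 1 = fromRows (fromRows g₁ (revMat F m * s₂ * g₁)) 1 ∧
      (fromCols (fromCols 1 0) 0 : Matrix (Fin 1) ((Fin 1 ⊕ Fin m) ⊕ Fin 1) F) * B' =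
        g₁ * fromCols (u * (revSwap F m)ᵀ) 1 := by
  have hA'eq := inverseSystemMatrix_eq_fromBlocks hs
  set A' := inverseSystemMatrix lam a b b' B a' b''
  set P := revSwap F m
  set Ah := fromBlocks (of fun _ _ => a) b' a' B
  set M := fromBlocks (-f₁) 0 (-s₂) (revMat F m)
  set e : Matrix (Fin 1 ⊕ Fin m) (Fin 1) F := fromRows 1 0
  have hM := isInvPair_fromBlocks_zero₁₂ hf₁.neg (isInvPair_revMat F m) (-s₂)
  have hA' := hA'eq ▸ isInvPair_fromBlocks_zero_one
    (((isInvPair_revSwap F m).mul hW).mul hM).neg (-(P * Ah * e))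
  refine ⟨_, hA', hA'.inv_mul_eq_of_mul_eq ?_, hA'.mul_inv_eq_of_mul_eq ?_⟩
  · have hMs : M * fromRows g₁ (revMat F m * s₂ * g₁) + e = 0 := by
      simp [M, e, fromBlocks_mul_fromRows, fromRows_add_fromRows, hf₁.1, ← Matrix.mul_assoc,
        (isInvPair_revMat F m).1]
    rw [hA'eq, fromBlocks_mul_fromRows]
    simp only [Matrix.neg_mul, Matrix.mul_one, Matrix.zero_mul, zero_add]
    rw [Matrix.mul_assoc (P * Ah) M, ← neg_add, ← Matrix.mul_add, hMs, Matrix.mul_zero, neg_zero]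
  · have hrow : ∀ {k : Type} [Fintype k] (X : Matrix (Fin 1 ⊕ Fin m) k F),
        u * Pᵀ * (P * Ah * X) = (fromCols 1 0 : Matrix (Fin 1) (Fin 1 ⊕ Fin m) F) * X := by
      intro k _ X
      rw [← hu, Matrix.mul_assoc u, ← Matrix.mul_assoc Pᵀ, ← Matrix.mul_assoc Pᵀ,
        (isInvPair_revSwap F m).2, Matrix.one_mul, Matrix.mul_assoc]
    rw [hA'eq, Matrix.mul_assoc, fromCols_mul_fromBlocks]
    simp [Matrix.mul_neg, hrow, M, e, fromCols_mul_fromBlocks, fromCols_mul_fromRows, hf₁.2]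

theorem linearIndependent_inverse_leftFamily (hlam : lam ≠ 0) (hf : f ≠ 0)
    (s : Matrix ((Fin 1 ⊕ Fin m) ⊕ Fin 1) (Fin 1) F) (hs₁ : s (.inl (.inl 0)) 0 = f)
    (hs₃ : s (.inr 0) 0 = algebraMap K F lam) (h : LinearIndependent K fun p => s p 0) :
    LinearIndependent K fun p => fromRows
      (fromRows (of fun _ _ => f⁻¹ : Matrix (Fin 1) (Fin 1) F)
        (revMat F m * s.toRows₁.toRows₂ * (of fun _ _ => f⁻¹ : Matrix (Fin 1) (Fin 1) F)))
      (1 : Matrix (Fin 1) (Fin 1) F) p 0 := by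
  convert h.units_smul_comp_mul_right (revIndex_involutive m).injective
    (Sum.elim (Sum.elim (fun _ => (Units.mk0 lam hlam)⁻¹) 1) 1) (inv_ne_zero hf) using 1
  funext p
  have hlam' : algebraMap K F lam ≠ 0 := by simpa using hlam
  rcases p with ((i | i) | i) <;>
    simp [revIndex, hs₁, hs₃, Matrix.mul_apply, revMat, hf, hlam', Units.smul_def,
      Algebra.smul_def, Fin.fin_one_eq_zero]

theorem linearIndependent_inverse_rightFamily (hlam : lam ≠ 0) (hf : f ≠ 0)
    (t : Matrix (Fin 1) ((Fin 1 ⊕ Fin m) ⊕ Fin 1) F)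
    (ht₃ : t 0 (.inr 0) * algebraMap K F lam = f)
    (h : LinearIndependent K fun o => Option.casesOn' o 1 (t 0)) :
    LinearIndependent K fun o => Option.casesOn' o 1
      (((of fun _ _ => f⁻¹ : Matrix (Fin 1) (Fin 1) F) *
        fromCols (t.toCols₁ * (revSwap F m)ᵀ) (1 : Matrix (Fin 1) (Fin 1) F)) 0) := by
  convert h.units_smul_comp_mul_left (inverseRightIndex_injective m)
    (Option.elim' (Units.mk0 lam hlam) 1) (inv_ne_zero hf) using 1
  funext o
  rcases o with _ | ((i | i) | i)
  · simp only [inverseRightIndex, Option.casesOn'_none, Option.casesOn'_some, Option.elim'_none,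
      Units.smul_def, Units.val_mk0, Algebra.smul_def, mul_fromCols, mul_one]
    rw [← Algebra.left_comm, Algebra.commutes, ht₃, inv_mul_cancel₀ hf]
  all_goals simp [inverseRightIndex, Matrix.mul_apply, revSwap, revMat, Fin.fin_one_eq_zero]

end InverseSystem

/-- Inverse of type (0,1): if `f ≠ 0` has a minimal ALS of dimension `n = m + 2` with
system matrix `[[a, b', b], [a', B, b''], [0, 0, 1]]`, right-hand side `(0,…,0,λ)ᵀ`
and `1 ∉ R(𝒜)`, then `A' = [[−λ Σ b'', −Σ B Σ, −Σ a'], [−λ b, −b' Σ, −a], [0, 0, 1]]`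
gives a minimal ALS `(e₁, A', e_n)` of dimension `n` for `f⁻¹` with `1 ∉ R(𝒜')`. -/
theorem inverse_type_zero_one {K F : Type*} [Field K] [DivisionRing F] [Algebra K F]
    {m : ℕ}
    (f : F) (hne : f ≠ 0)
    (a b : F) (b' : Matrix (Fin 1) (Fin m) F) (B : Matrix (Fin m) (Fin m) F)
    (a' b'' : Matrix (Fin m) (Fin 1) F) (lam : K)
    (A : Matrix ((Fin 1 ⊕ Fin m) ⊕ Fin 1) ((Fin 1 ⊕ Fin m) ⊕ Fin 1) F)
    (hA : A = fromBlocks (fromBlocks (Matrix.of fun _ _ => a) b' a' B)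
      (fromRows (Matrix.of fun _ _ => b) b'') 0 1)
    (v : Matrix ((Fin 1 ⊕ Fin m) ⊕ Fin 1) (Fin 1) F)
    (hv : v = Matrix.of fun p _ =>
      if p = Sum.inr 0 then algebraMap K F lam else 0)
    (Binv : Matrix ((Fin 1 ⊕ Fin m) ⊕ Fin 1) ((Fin 1 ⊕ Fin m) ⊕ Fin 1) F)
    (hAB : A * Binv = 1) (hBA : Binv * A = 1)
    (hf : f = (Binv * v) (Sum.inl (Sum.inl 0)) 0)
    (hleft : LinearIndependent K fun p => (Binv * v) p 0)
    (hright : LinearIndependent K fun q => Binv (Sum.inl (Sum.inl 0)) q)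
    (honeR : (1 : F) ∉ Submodule.span K
      (Set.range fun q => Binv (Sum.inl (Sum.inl 0)) q)) :
    let S : Matrix (Fin m) (Fin m) F := revMat F m
    let A' : Matrix ((Fin m ⊕ Fin 1) ⊕ Fin 1) ((Fin 1 ⊕ Fin m) ⊕ Fin 1) F :=
      fromBlocks
        (fromBlocks (-(algebraMap K F lam • (S * b''))) (-(S * B * S))
          (Matrix.of fun _ _ => -(algebraMap K F lam * b)) (-(b' * S)))
        (fromRows (-(S * a')) (Matrix.of fun _ _ => -a))
        0 1
    let v' : Matrix ((Fin m ⊕ Fin 1) ⊕ Fin 1) (Fin 1) F :=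
      Matrix.of fun p _ => if p = Sum.inr 0 then 1 else 0
    ∃ B' : Matrix ((Fin 1 ⊕ Fin m) ⊕ Fin 1) ((Fin m ⊕ Fin 1) ⊕ Fin 1) F,
      A' * B' = 1 ∧ B' * A' = 1 ∧
      (B' * v') (Sum.inl (Sum.inl 0)) 0 = f⁻¹ ∧
      (LinearIndependent K fun p => (B' * v') p 0) ∧
      (LinearIndependent K fun q => B' (Sum.inl (Sum.inl 0)) q) ∧
      (1 : F) ∉ Submodule.span K
        (Set.range fun q => B' (Sum.inl (Sum.inl 0)) q) := by
  intro S A' v'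
  have hv₀ : v = fromRows 0 (of fun _ _ => algebraMap K F lam) := by
    rw [hv]; ext ((p | p) | p) j <;> simp [Fin.fin_one_eq_zero]
  set s := Binv * v
  have hAs : A * s = fromRows 0 (of fun _ _ => algebraMap K F lam) := by
    rw [← Matrix.mul_assoc, hAB, Matrix.one_mul, hv₀]
  set E : Matrix (Fin 1) ((Fin 1 ⊕ Fin m) ⊕ Fin 1) F := fromCols (fromCols 1 0) 0
  have htA : E * Binv * A = E := by rw [Matrix.mul_assoc, hBA, Matrix.mul_one]
  have hAinv : IsInvPair A Binv := ⟨hAB, hBA⟩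
  rw [hA] at hAs htA hAinv
  obtain ⟨hs₃, hs⟩ := fromBlocks_zero_one_mul_eq_fromRows hAs
  have hs₁ : s.toRows₁.toRows₁ = of fun _ _ => f := by
    ext i j; simp [hf, Fin.fin_one_eq_zero]
  rw [← fromRows_toRows s.toRows₁, hs₁] at hs
  have ht₃ : (E * Binv) 0 (.inr 0) * algebraMap K F lam = f := by
    simp [E, hf, s, hv₀, Matrix.mul_apply]
  have hlam : lam ≠ 0 := by rintro rfl; exact hne (by simp [← ht₃])
  obtain ⟨B', hB', hBv, hBrow⟩ := exists_isInvPair_inverseSystemMatrix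
    hAinv.of_fromBlocks_zero_one (isInvPair_of_const hne) hs
    (toCols₁_mul_eq_of_mul_fromBlocks_zero_one htA)
  have hv' : v' = fromRows 0 1 := by ext ((p | p) | p) j <;> simp [v', Fin.fin_one_eq_zero]
  have hright' := linearIndependent_inverse_rightFamily hlam hne (E * Binv) ht₃
    (by rw [funext (fromCols_fromCols_one_zero_mul_apply Binv)]; exact hright.option honeR)
  rw [← hBrow, funext (fromCols_fromCols_one_zero_mul_apply B')] at hright'
  have hBv' : B' * v' = _ := hv' ▸ hBv
  refine ⟨B', hB'.1, hB'.2, by simp [hBv'], ?_, linearIndependent_option'.mp hright'⟩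
  rw [hBv']
  exact linearIndependent_inverse_leftFamily hlam hne s hf.symm
    (by simpa using congrFun (congrFun hs₃ 0) 0) hleft
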